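/- In the (n,k)-arrangement graph A_{n,k} with n ≥ k + 2 and k ≥ 2, every edge is contained in exactly n − k − 1 triangles. -/

import Mathlib

/-- The `(n,k)`-arrangement graph `A_{n,k}`: vertices are arrangements (injections)
of `k` elements from `{1, …, n}`, and two arrangements are adjacent iff they differ
in exactly one position. -/
def arrGraph (n k : ℕ) : SimpleGraph (Fin k ↪ Fin n) where
  Adj p q := ∃ i : Fin k, p i ≠ q i ∧ ∀ j : Fin k, j ≠ i → p j = q j
  symm := by
    constructor
    rintro p q ⟨i, hi, hj⟩
    exact ⟨i, hi.symm, fun j hji => (hj j hji).symm⟩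
  loopless := by
    constructor
    rintro p ⟨i, hi, -⟩
    exact hi rfl

/-!
If `p` and `q` differ exactly at position `i`, a common neighbour `r` must also differ from
both only at `i`: moving away from `p` at another position `a` would force `r` to agree with
`p`, hence to differ from `q`, at `i`, leaving it two changes away from `q`. So the common
neighbours are the arrangements `p` with the value at `i` replaced by one of the
`n - (k + 1)` symbols outside `{q i} ∪ range p`.
-/

namespace Function.Embedding

variable {α β : Type*} {p r : α ↪ β} {i : α}

theorem eq_iff_apply_eq_of_forall_ne (h : ∀ j ≠ i, r j = p j) : r = p ↔ r i = p i := by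
  refine ⟨fun hrp => hrp ▸ rfl, fun hri => ext fun j => ?_⟩
  rcases eq_or_ne j i with rfl | hj
  exacts [hri, h j hj]

theorem apply_mem_range_iff_eq_of_forall_ne (h : ∀ j ≠ i, r j = p j) :
    r i ∈ Set.range p ↔ r = p := by
  rw [eq_iff_apply_eq_of_forall_ne h]
  refine ⟨fun ⟨j, hj⟩ => ?_, fun hri => ⟨i, hri.symm⟩⟩
  rcases eq_or_ne j i with rfl | hji
  · exact hj.symm
  · exact absurd (r.injective ((h j hji).trans hj)) hji

theorem ncard_setOf_forall_ne_and_apply_notMem (p : α ↪ β) (i : α) {s : Set β}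
    (hs : Set.range p ⊆ s) :
    {r : α ↪ β | (∀ j ≠ i, r j = p j) ∧ r i ∉ s}.ncard = sᶜ.ncard := by
  refine Set.BijOn.ncard_eq (f := fun r : α ↪ β => r i)
    ⟨fun r hr => Set.mem_compl hr.2, fun r hr r' hr' hrr' => ?_, fun v hv => ?_⟩
  · exact (eq_iff_apply_eq_of_forall_ne fun j hj => (hr.1 j hj).trans (hr'.1 j hj).symm).2 hrr'
  · classical
    have hpv : ∀ j, p j ≠ v := fun j hj => hv (hs ⟨j, hj⟩)
    refine ⟨p.setValue i v, ⟨fun j hj => setValue_eq_of_ne hj (hpv j), ?_⟩, setValue_eq ..⟩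
    simpa [setValue_eq] using hv

end Function.Embedding

open Function.Embedding

variable {n k : ℕ} {p q r : Fin k ↪ Fin n} {i : Fin k}

theorem arrGraph_forall_ne_of_adj_of_adj (hpi : p i ≠ q i) (hi : ∀ j ≠ i, p j = q j)
    (hpr : (arrGraph n k).Adj p r) (hqr : (arrGraph n k).Adj q r) : ∀ j ≠ i, r j = p j := by
  obtain ⟨a, hpra, hpr⟩ := hpr
  obtain ⟨b, hqrb, hqr⟩ := hqr
  suffices a = i by subst this; exact fun j hj => (hpr j hj).symm
  by_contra hai
  have hri : p i = r i := hpr i (Ne.symm hai)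
  have hbi : b = i := by
    by_contra hb
    exact hpi (hri.trans (hqr i (Ne.symm hb)).symm)
  exact hpra ((hi a hai).trans (hqr a (hbi ▸ hai)))

theorem arrGraph_commonNeighbors_eq (hpi : p i ≠ q i) (hi : ∀ j ≠ i, p j = q j) :
    (arrGraph n k).commonNeighbors p q =
      {r | (∀ j ≠ i, r j = p j) ∧ r i ∉ insert (q i) (Set.range p)} := by
  ext r
  rw [SimpleGraph.mem_commonNeighbors]
  constructor
  · rintro ⟨hpr, hqr⟩
    have hr := arrGraph_forall_ne_of_adj_of_adj hpi hi hpr hqr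
    have hrq : ∀ j ≠ i, r j = q j := fun j hj => (hr j hj).trans (hi j hj)
    refine ⟨hr, ?_⟩
    rw [Set.mem_insert_iff, apply_mem_range_iff_eq_of_forall_ne hr,
      ← eq_iff_apply_eq_of_forall_ne hrq]
    exact not_or_intro hqr.ne' hpr.ne'
  · rintro ⟨hr, hri⟩
    rw [Set.mem_insert_iff, not_or] at hri
    refine ⟨⟨i, ?_, fun j hj => (hr j hj).symm⟩, ⟨i, Ne.symm hri.1, fun j hj => ?_⟩⟩
    · exact fun hpr => hri.2 ⟨i, hpr⟩
    · exact (hi j hj).symm.trans (hr j hj).symm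

theorem arrGraph_edge_triangles_general (n k : ℕ)
    (p q : Fin k ↪ Fin n) (hpq : (arrGraph n k).Adj p q) :
    {r : Fin k ↪ Fin n | (arrGraph n k).Adj p r ∧ (arrGraph n k).Adj q r}.ncard
      = n - k - 1 := by
  obtain ⟨i, hpi, hi⟩ := hpq
  have hqi : q i ∉ Set.range p := by
    rw [apply_mem_range_iff_eq_of_forall_ne fun j hj => (hi j hj).symm]
    exact fun hqp => hpi (hqp ▸ rfl)
  change ((arrGraph n k).commonNeighbors p q).ncard = _
  rw [arrGraph_commonNeighbors_eq hpi hi,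
    ncard_setOf_forall_ne_and_apply_notMem p i (Set.subset_insert _ _), Set.ncard_compl,
    Set.ncard_insert_of_notMem hqi, Set.ncard_range_of_injective p.injective]
  simp only [Nat.card_eq_fintype_card, Fintype.card_fin]
  omega

/-- In `A_{n,k}` with `n ≥ k + 2` and `k ≥ 2`, every edge `pq` is contained in
exactly `n - k - 1` triangles, i.e. there are exactly `n - k - 1` vertices adjacent
to both endpoints. -/
theorem arrGraph_edge_triangles (n k : ℕ) (hn : k + 2 ≤ n) (hk : 2 ≤ k)
    (p q : Fin k ↪ Fin n) (hpq : (arrGraph n k).Adj p q) :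
    {r : Fin k ↪ Fin n | (arrGraph n k).Adj p r ∧ (arrGraph n k).Adj q r}.ncard
      = n - k - 1 :=
  arrGraph_edge_triangles_general n k p q hpq
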